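/- Encoding correctness for a one-hidden-layer ReLU network: f(x) = ℓ (where f(x) = argmax_ℓ (W₂ relu(W₁x + b₁) + b₂)_ℓ with ties broken toward ℓ) holds if and only if there exist vectors x⁰, x¹, x² with x⁰ = x, x¹ = relu(W₁x⁰ + b₁) characterized by the disjunctive ReLU constraints, x² = W₂x¹ + b₂, and x²_ℓ ≥ x²_{ℓ'} for all ℓ' ≠ ℓ. -/

import Mathlib

theorem relu_cases_iff {α : Type*} [LinearOrder α] [Zero α] {a y : α} :
    (a ≤ 0 ∧ y = 0) ∨ (a ≥ 0 ∧ y = a) ↔ y = max a 0 := by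
  rcases le_total a 0 with ha | ha
  · rw [max_eq_right ha]
    exact ⟨by rintro (⟨_, rfl⟩ | ⟨ha', rfl⟩) <;> order, fun hy => .inl ⟨ha, hy⟩⟩
  · rw [max_eq_left ha]
    exact ⟨by rintro (⟨ha', rfl⟩ | ⟨_, rfl⟩) <;> order, fun hy => .inr ⟨ha, hy⟩⟩

theorem forall_ne_imp_le_iff {ι α : Type*} [Preorder α] (v : ι → α) (i : ι) :
    (∀ j, j ≠ i → v j ≤ v i) ↔ ∀ j, v j ≤ v i :=
  ⟨fun h j => (eq_or_ne j i).elim (fun hj => hj ▸ le_rfl) (h j), fun h j _ => h j⟩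

theorem encoding_correctness (n h k : ℕ)
    (W₁ : Matrix (Fin h) (Fin n) ℝ) (b₁ : Fin h → ℝ)
    (W₂ : Matrix (Fin k) (Fin h) ℝ) (b₂ : Fin k → ℝ)
    (ℓ : Fin k) (f : (Fin n → ℝ) → Fin k)
    (hf : ∀ x, f x = ℓ ↔ ∀ ℓ' : Fin k,
      (W₂.mulVec (fun j => max (W₁.mulVec x j + b₁ j) 0) + b₂) ℓ' ≤
      (W₂.mulVec (fun j => max (W₁.mulVec x j + b₁ j) 0) + b₂) ℓ) :
    ∀ x : Fin n → ℝ, f x = ℓ ↔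
      ∃ (x0 : Fin n → ℝ) (x1 : Fin h → ℝ) (x2 : Fin k → ℝ),
        x0 = x ∧
        (∀ j : Fin h,
          (W₁.mulVec x0 j + b₁ j ≤ 0 ∧ x1 j = 0) ∨
          (W₁.mulVec x0 j + b₁ j ≥ 0 ∧ x1 j = W₁.mulVec x0 j + b₁ j)) ∧
        x2 = W₂.mulVec x1 + b₂ ∧
        (∀ ℓ' : Fin k, ℓ' ≠ ℓ → x2 ℓ' ≤ x2 ℓ) := by
  intro x
  simp only [relu_cases_iff, ← funext_iff, exists_and_left, exists_eq_left, forall_ne_imp_le_iff]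
  exact hf x
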